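/- Consider ℝⁿ with the Euclidean metric, so the dynamics is q̈ = ∇f(q) with ∇f the usual gradient of a smooth function f : ℝⁿ → ℝ. Let γ : ℝ → ℝⁿ be a smooth, injective, proper, unit-speed curve (‖γ̇(s)‖ = 1 for all s) with image C = γ(ℝ). If C is a strict normal mode of q̈ = ∇f(q), then C is a straight line: there exist p, w ∈ ℝⁿ with ‖w‖ = 1 such that C = {p + s·w : s ∈ ℝ}, and moreover ∇f(p + s·w) lies in the span of w for every s ∈ ℝ. -/

import Mathlib

/-!
Start the motion at `γ s` with velocity `v • γ' s`. By invariance it stays on the curve, and since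
`γ` is an embedding it can be written as `γ ∘ σ` with `σ` of class `C²`, `σ 0 = s`, `σ' 0 = v`.
Differentiating twice, `∇f (γ s) = σ'' 0 • γ' s + v² • γ'' s`. Comparing two speeds puts `γ'' s`
in the span of `γ' s`, while unit speed makes it orthogonal to `γ' s`; hence `γ'' = 0`, `γ` is a
line, and the same identity shows that `∇f` is tangent to it.
-/

/-- The tangent bundle `TC = {(γ(s), v·γ̇(s)) : s, v ∈ ℝ}` of the curve `C = γ(ℝ)` in `ℝⁿ`. -/
def TangentBundleOf {n : ℕ} (γ : ℝ → EuclideanSpace ℝ (Fin n)) :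
    Set (EuclideanSpace ℝ (Fin n) × EuclideanSpace ℝ (Fin n)) :=
  {p | ∃ s v : ℝ, p.1 = γ s ∧ p.2 = v • deriv γ s}

/-- `C = γ(ℝ)` is a strict normal mode of the Euclidean dynamics `q̈ = ∇f(q)`: its tangent
bundle is an invariant set, i.e. every `C²` solution meeting it (at some time `t₀` of its
open interval of definition) remains on it. -/
def IsStrictNormalMode {n : ℕ} (f : EuclideanSpace ℝ (Fin n) → ℝ)
    (γ : ℝ → EuclideanSpace ℝ (Fin n)) : Prop :=
  ∀ I : Set ℝ, IsOpen I → I.OrdConnected →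
    ∀ q : ℝ → EuclideanSpace ℝ (Fin n), ContDiffOn ℝ 2 q I →
      (∀ t ∈ I, deriv (deriv q) t = gradient f (q t)) →
      ∀ t₀ ∈ I, (q t₀, deriv q t₀) ∈ TangentBundleOf γ →
        ∀ t ∈ I, (q t, deriv q t) ∈ TangentBundleOf γ

open Set Filter Topology
open scoped RealInnerProductSpace

section NormedSpace

variable {E : Type*} [NormedAddCommGroup E] [NormedSpace ℝ E]

theorem contDiffOn_two_of_hasDerivAt_of_hasDerivAt {F : E → E} (hF : Continuous F) {U : Set ℝ}
    (hU : IsOpen U) {q p : ℝ → E} (hq : ∀ t ∈ U, HasDerivAt q (p t) t)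
    (hp : ∀ t ∈ U, HasDerivAt p (F (q t)) t) :
    ContDiffOn ℝ 2 q U ∧ ∀ t ∈ U, deriv (deriv q) t = F (q t) := by
  have hderiv_q : EqOn (deriv q) p U := fun t ht => (hq t ht).deriv
  have hderiv_p : EqOn (deriv p) (F ∘ q) U := fun t ht => (hp t ht).deriv
  have hq_cont : ContinuousOn q U := fun t ht => (hq t ht).continuousAt.continuousWithinAt
  have hp_C1 : ContDiffOn ℝ 1 p U := by
    rw [show (1 : WithTop ℕ∞) = 0 + 1 from rfl, contDiffOn_succ_iff_deriv_of_isOpen hU]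
    refine ⟨fun t ht => (hp t ht).differentiableAt.differentiableWithinAt, by simp, ?_⟩
    exact contDiffOn_zero.mpr ((hF.comp_continuousOn hq_cont).congr hderiv_p)
  refine ⟨?_, fun t ht => ?_⟩
  · rw [show (2 : WithTop ℕ∞) = 1 + 1 from rfl, contDiffOn_succ_iff_deriv_of_isOpen hU]
    exact ⟨fun t ht => (hq t ht).differentiableAt.differentiableWithinAt, by simp,
      hp_C1.congr hderiv_q⟩
  · rw [(hderiv_q.eventuallyEq_of_mem (hU.mem_nhds ht)).deriv_eq]
    exact hderiv_p ht

theorem exists_local_solution_second_order [CompleteSpace E] {F : E → E} (hF : ContDiff ℝ 1 F)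
    (x₀ v₀ : E) :
    ∃ q : ℝ → E, ∃ ε > 0, q 0 = x₀ ∧ deriv q 0 = v₀ ∧ ContDiffOn ℝ 2 q (Ioo (-ε) ε) ∧
      ∀ t ∈ Ioo (-ε) ε, deriv (deriv q) t = F (q t) := by
  have hV : ContDiff ℝ 1 fun z : E × E => (z.2, F z.1) :=
    contDiff_snd.prodMk (hF.comp contDiff_fst)
  obtain ⟨α, hα₀, ε, hε, hα⟩ :=
    hV.contDiffAt.exists_forall_mem_closedBall_exists_eq_forall_mem_Ioo_hasDerivAt₀
      (x₀ := (x₀, v₀)) 0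
  rw [zero_sub, zero_add] at hα
  have h₀ : (0 : ℝ) ∈ Ioo (-ε) ε := ⟨neg_lt_zero.mpr hε, hε⟩
  have hfst : ∀ t ∈ Ioo (-ε) ε, HasDerivAt (fun t => (α t).1) (α t).2 t :=
    fun t ht => (hα t ht).fst
  have hsnd : ∀ t ∈ Ioo (-ε) ε, HasDerivAt (fun t => (α t).2) (F (α t).1) t :=
    fun t ht => (hα t ht).snd
  obtain ⟨hC2, hode⟩ :=
    contDiffOn_two_of_hasDerivAt_of_hasDerivAt hF.continuous isOpen_Ioo hfst hsnd
  refine ⟨fun t => (α t).1, ε, hε, by simp [hα₀], by simp [(hfst 0 h₀).deriv, hα₀], hC2, hode⟩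

theorem deriv_deriv_comp {γ : ℝ → E} {σ : ℝ → ℝ} {t : ℝ} (hγ : ContDiff ℝ 2 γ)
    (hσ : ContDiffAt ℝ 2 σ t) :
    deriv (deriv (γ ∘ σ)) t =
      deriv (deriv σ) t • deriv γ (σ t) + deriv σ t ^ 2 • deriv (deriv γ) (σ t) := by
  have hγd : Differentiable ℝ γ := hγ.differentiable two_ne_zero
  have hσ' : DifferentiableAt ℝ (deriv σ) t := by
    have : ContDiffAt ℝ 1 (fun y => fderiv ℝ σ y 1) t :=
      (hσ.fderiv_right (by norm_num)).clm_apply contDiffAt_const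
    exact this.differentiableAt one_ne_zero
  have hchain : deriv (γ ∘ σ) =ᶠ[𝓝 t] fun y => deriv σ y • deriv γ (σ y) := by
    filter_upwards [hσ.eventually (by simp)] with y hy
    exact deriv.scomp y (hγd _) (hy.differentiableAt two_ne_zero)
  rw [hchain.deriv_eq]
  have hγ' : HasDerivAt (fun y => deriv γ (σ y)) (deriv σ t • deriv (deriv γ) (σ t)) t :=
    (hγ.differentiable_deriv_two _).hasDerivAt.scomp t
      (hσ.differentiableAt two_ne_zero).hasDerivAt
  rw [(hσ'.hasDerivAt.fun_smul hγ').deriv, smul_smul, ← sq, add_comm]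

theorem eq_add_smul_of_deriv_eq {γ : ℝ → E} {w : E} (hγ : Differentiable ℝ γ)
    (h : ∀ s, deriv γ s = w) (s : ℝ) : γ s = γ 0 + s • w := by
  have hd : ∀ u, HasDerivAt (fun r => γ r - r • w) 0 u := fun u => by
    simpa [h u] using (hγ u).hasDerivAt.fun_sub ((hasDerivAt_id u).smul_const w)
  have := is_const_of_deriv_eq_zero (fun u => (hd u).differentiableAt) (fun u => (hd u).deriv) s 0
  simp only [zero_smul, sub_zero] at this
  rw [← this, sub_add_cancel]

end NormedSpace

section InnerProductSpace

variable {E : Type*} [NormedAddCommGroup E] [InnerProductSpace ℝ E]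

theorem ContDiff.gradient [CompleteSpace E] {f : E → ℝ} {k : WithTop ℕ∞}
    (hf : ContDiff ℝ (k + 1) f) : ContDiff ℝ k (gradient f) :=
  (InnerProductSpace.toDual ℝ E).symm.contDiff.comp (hf.fderiv_right le_rfl)

theorem inner_deriv_eq_zero_of_norm_eq_const {h : ℝ → E} {c s : ℝ} (hd : DifferentiableAt ℝ h s)
    (hc : ∀ u, ‖h u‖ = c) : ⟪h s, deriv h s⟫ = 0 := by
  have h₂ : HasDerivAt (fun u => ‖h u‖ ^ 2) (2 * ⟪h s, deriv h s⟫) s := hd.hasDerivAt.norm_sq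
  simp only [hc] at h₂
  simpa using h₂.unique (hasDerivAt_const s (c ^ 2))

theorem eq_zero_of_mem_span_singleton_of_inner_eq_zero {u a : E} (ha : a ∈ ℝ ∙ u)
    (h : ⟪u, a⟫ = 0) : a = 0 := by
  have : a ∈ (ℝ ∙ u) ⊓ (ℝ ∙ u)ᗮ := ⟨ha, Submodule.mem_orthogonal_singleton_iff_inner_right.mpr h⟩
  simpa [Submodule.inf_orthogonal_eq_bot] using this

theorem exists_contDiffAt_reparam_of_eventually_mem_range {k : WithTop ℕ∞} {γ q : ℝ → E}
    (hγ : ContDiff ℝ k γ) (hk : k ≠ 0) (hemb : IsEmbedding γ) {s₀ t₀ : ℝ}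
    (hreg : deriv γ s₀ ≠ 0) (hq : ContDiffAt ℝ k q t₀) (hq₀ : q t₀ = γ s₀)
    (hrange : ∀ᶠ t in 𝓝 t₀, q t ∈ range γ) :
    ∃ σ : ℝ → ℝ, ContDiffAt ℝ k σ t₀ ∧ σ t₀ = s₀ ∧ q =ᶠ[𝓝 t₀] γ ∘ σ := by
  -- invert the coordinate `u ↦ ⟪γ u, w⟫`, normalised to have derivative `1` at `s₀`
  set w := (‖deriv γ s₀‖ ^ 2)⁻¹ • deriv γ s₀
  set g : ℝ → ℝ := fun u => ⟪γ u, w⟫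
  have hg : ContDiffAt ℝ k g s₀ := (hγ.inner ℝ contDiff_const).contDiffAt
  have hg' : HasFDerivAt g (ContinuousLinearEquiv.refl ℝ ℝ : ℝ →L[ℝ] ℝ) s₀ := by
    have hw : ⟪deriv γ s₀, w⟫ = 1 := by
      simp [w, real_inner_smul_right, hreg]
    have h₁ := (hγ.differentiable hk s₀).hasDerivAt.inner ℝ (hasDerivAt_const s₀ w)
    rw [inner_zero_right, zero_add, hw] at h₁
    have hrefl : ((ContinuousLinearEquiv.refl ℝ ℝ : ℝ ≃L[ℝ] ℝ) : ℝ →L[ℝ] ℝ) =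
        ContinuousLinearMap.toSpanSingleton ℝ 1 := by
      ext; simp
    rw [hrefl, ← hasDerivAt_iff_hasFDerivAt]
    exact h₁
  set ψ := hg.localInverse hg' hk
  have hψg : ∀ᶠ u in 𝓝 s₀, ψ (g u) = u := (hg.hasStrictFDerivAt' hg' hk).eventually_left_inverse
  have hnear : ∀ᶠ x in 𝓝 (γ s₀), ∀ u, γ u = x → ψ (g u) = u := by
    rw [hemb.isInducing.nhds_eq_comap] at hψg
    obtain ⟨V, hV, hsub⟩ := hψg
    filter_upwards [hV] with x hx u hu
    exact hsub (show γ u ∈ V from hu ▸ hx)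
  have hqt : Tendsto q (𝓝 t₀) (𝓝 (γ s₀)) := hq₀ ▸ hq.continuousAt
  refine ⟨ψ ∘ fun t => ⟪q t, w⟫, ?_, ?_, ?_⟩
  · have hψ : ContDiffAt ℝ k ψ ⟪q t₀, w⟫ := hq₀ ▸ hg.to_localInverse hg' hk
    exact hψ.comp t₀ (hq.inner ℝ contDiffAt_const)
  · simpa [hq₀] using hg.localInverse_apply_image hg' hk
  · filter_upwards [hrange, hqt.eventually hnear] with t ⟨u, hu⟩ ht
    simp only [Function.comp_apply, ← hu]
    exact congrArg γ (ht u hu).symm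

end InnerProductSpace

theorem IsStrictNormalMode.exists_gradient_eq_smul_add_sq_smul {n : ℕ}
    {f : EuclideanSpace ℝ (Fin n) → ℝ} {γ : ℝ → EuclideanSpace ℝ (Fin n)}
    (hmode : IsStrictNormalMode f γ) (hf : ContDiff ℝ 2 f) (hγ : ContDiff ℝ 2 γ)
    (hemb : IsEmbedding γ) {s : ℝ} (hreg : deriv γ s ≠ 0) (v : ℝ) :
    ∃ c : ℝ, gradient f (γ s) = c • deriv γ s + v ^ 2 • deriv (deriv γ) s := by
  obtain ⟨q, ε, hε, hq₀, hq'₀, hC2, hode⟩ :=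
    exists_local_solution_second_order (ContDiff.gradient (k := 1) hf) (γ s) (v • deriv γ s)
  have h₀ : (0 : ℝ) ∈ Ioo (-ε) ε := ⟨neg_lt_zero.mpr hε, hε⟩
  have hnhds : Ioo (-ε) ε ∈ 𝓝 0 := isOpen_Ioo.mem_nhds h₀
  have hstay := hmode _ isOpen_Ioo ordConnected_Ioo q hC2 hode 0 h₀ ⟨s, v, hq₀, hq'₀⟩
  have hrange : ∀ᶠ t in 𝓝 0, q t ∈ range γ := by
    filter_upwards [hnhds] with t ht
    obtain ⟨u, -, hu, -⟩ := hstay t ht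
    exact ⟨u, hu.symm⟩
  obtain ⟨σ, hσ, hσ₀, hqσ⟩ := exists_contDiffAt_reparam_of_eventually_mem_range hγ two_ne_zero
    hemb hreg (hC2.contDiffAt hnhds) hq₀ hrange
  have hσ'₀ : deriv σ 0 = v := by
    have h := hqσ.deriv_eq
    rw [hq'₀, deriv.scomp 0 (hγ.differentiable two_ne_zero _) (hσ.differentiableAt two_ne_zero),
      hσ₀] at h
    exact smul_left_injective ℝ hreg h.symm
  refine ⟨deriv (deriv σ) 0, ?_⟩
  rw [← hq₀, ← hode 0 h₀, hqσ.deriv.deriv_eq, deriv_deriv_comp hγ hσ, hσ₀, hσ'₀]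

/-- **Corollary 1.** In `ℝⁿ` with the Euclidean metric, strict normal modes are straight
lines: if the image `C = γ(ℝ)` of a smooth, injective, proper, unit-speed curve `γ` is a
strict normal mode of `q̈ = ∇f(q)`, then `C = {p + s·w : s ∈ ℝ}` for some `p, w` with
`‖w‖ = 1`, and the gradient `∇f(p + s·w)` lies in the span of `w` for every `s`. -/
theorem strict_normal_mode_euclidean_is_line
    {n : ℕ} (f : EuclideanSpace ℝ (Fin n) → ℝ) (hf : ContDiff ℝ (⊤ : ℕ∞) f)
    (γ : ℝ → EuclideanSpace ℝ (Fin n)) (hγsmooth : ContDiff ℝ (⊤ : ℕ∞) γ)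
    (hγinj : Function.Injective γ) (hγproper : IsProperMap γ)
    (hγunit : ∀ s : ℝ, ‖deriv γ s‖ = 1)
    (hmode : IsStrictNormalMode f γ) :
    ∃ p w : EuclideanSpace ℝ (Fin n), ‖w‖ = 1 ∧
      Set.range γ = {x | ∃ s : ℝ, x = p + s • w} ∧
      ∀ s : ℝ, ∃ a : ℝ, gradient f (p + s • w) = a • w := by
  have hγ₂ : ContDiff ℝ 2 γ := hγsmooth.of_le (by norm_cast)
  have hemb : IsEmbedding γ := (IsClosedEmbedding.of_continuous_injective_isClosedMap
    hγ₂.continuous hγinj hγproper.isClosedMap).isEmbedding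
  have hreg (s : ℝ) : deriv γ s ≠ 0 := norm_ne_zero_iff.mp (by simp [hγunit s])
  have hacc (s v : ℝ) :=
    hmode.exists_gradient_eq_smul_add_sq_smul (hf.of_le (by norm_cast)) hγ₂ hemb (hreg s) v
  -- comparing the speeds `1` and `2` puts `γ''` in the span of `γ'`, to which it is orthogonal
  have hflat (s : ℝ) : deriv (deriv γ) s = 0 := by
    obtain ⟨c₁, h₁⟩ := hacc s 1
    obtain ⟨c₂, h₂⟩ := hacc s 2
    refine eq_zero_of_mem_span_singleton_of_inner_eq_zero (u := deriv γ s) ?_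
      (inner_deriv_eq_zero_of_norm_eq_const (hγ₂.differentiable_deriv_two s) hγunit)
    refine Submodule.mem_span_singleton.mpr ⟨(c₁ - c₂) / 3, ?_⟩
    linear_combination (norm := module) (1 / 3 : ℝ) • h₂ - (1 / 3 : ℝ) • h₁
  have hconst (s : ℝ) : deriv γ s = deriv γ 0 :=
    is_const_of_deriv_eq_zero hγ₂.differentiable_deriv_two hflat s 0
  have hline := eq_add_smul_of_deriv_eq (hγ₂.differentiable two_ne_zero) hconst
  refine ⟨γ 0, deriv γ 0, hγunit 0, ?_, fun s => ?_⟩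
  · ext x
    refine exists_congr fun s => ?_
    rw [hline s, eq_comm]
  · obtain ⟨c, hc⟩ := hacc s 0
    refine ⟨c, ?_⟩
    rw [← hline s, hc, hflat, hconst, smul_zero, add_zero]
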